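/- For finite-valued random variables (X,Y) ∼ p(x,y), the quantity s*(X;Y) equals the supremum of I(U;Y)/I(U;X) over all finite-valued random variables U such that U - X - Y is a Markov chain and I(U;X) > 0. -/
import Mathlib


open scoped BigOperators

noncomputable section

/-- `p` is a probability mass function on a finite type. -/
def IsPMF {X : Type*} [Fintype X] (p : X → ℝ) : Prop :=
  (∀ x, 0 ≤ p x) ∧ ∑ x, p x = 1

/-- `p` is a joint probability mass function. -/
def IsJointPMF {X Y : Type*} [Fintype X] [Fintype Y] (p : X → Y → ℝ) : Prop :=
  (∀ x y, 0 ≤ p x y) ∧ ∑ x, ∑ y, p x y = 1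

/-- Hirschfeld–Gebelein–Rényi maximal correlation of a joint pmf `p`. -/
def maxCorr {X Y : Type*} [Fintype X] [Fintype Y] (p : X → Y → ℝ) : ℝ :=
  sSup {c : ℝ | ∃ f : X → ℝ, ∃ g : Y → ℝ,
    (∑ x, ∑ y, p x y * f x) = 0 ∧ (∑ x, ∑ y, p x y * g y) = 0 ∧
    (∑ x, ∑ y, p x y * (f x)^2) = 1 ∧ (∑ x, ∑ y, p x y * (g y)^2) = 1 ∧
    c = ∑ x, ∑ y, p x y * f x * g y}

/-- Relative entropy (KL divergence) between pmfs on a finite type. -/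
def KL {X : Type*} [Fintype X] (r p : X → ℝ) : ℝ :=
  ∑ x, r x * Real.log (r x / p x)

/-- `s*(X;Y)` for input distribution `p` and channel `W`. -/
def sStar {X Y : Type*} [Fintype X] [Fintype Y] (p : X → ℝ) (W : X → Y → ℝ) : ℝ :=
  sSup {c : ℝ | ∃ r : X → ℝ, IsPMF r ∧ r ≠ p ∧
    c = KL (fun y => ∑ x, r x * W x y) (fun y => ∑ x, p x * W x y) / KL r p}

/-- Shannon entropy of a pmf on a finite type. -/
def entropy {X : Type*} [Fintype X] (p : X → ℝ) : ℝ :=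
  ∑ x, Real.negMulLog (p x)

/-- Mutual information of a joint pmf. -/
def mutInfo {X Y : Type*} [Fintype X] [Fintype Y] (p : X → Y → ℝ) : ℝ :=
  entropy (fun x => ∑ y, p x y) + entropy (fun y => ∑ x, p x y)
    - entropy (fun z : X × Y => p z.1 z.2)

end
open Finset

lemma kl_pt {r p : ℝ} (hr : 0 ≤ r) (hp : 0 ≤ p) (hz : p = 0 → r = 0) :
    r - p ≤ r * Real.log (r / p) := by
  rcases eq_or_lt_of_le hr with h0 | h0
  · simp [← h0]; linarith
  · have hp0 : 0 < p := by
      rcases eq_or_lt_of_le hp with h | h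
      · exact absurd (hz h.symm) (ne_of_gt h0)
      · exact h
    have h1 : Real.log (p / r) ≤ p / r - 1 :=
      Real.log_le_sub_one_of_pos (div_pos hp0 h0)
    have h2 : Real.log (r / p) = - Real.log (p / r) := by
      rw [← Real.log_inv, inv_div]
    have h3 : 1 - p / r ≤ Real.log (r / p) := by rw [h2]; linarith
    calc r - p = r * (1 - p / r) := by field_simp
    _ ≤ r * Real.log (r / p) := by
        exact mul_le_mul_of_nonneg_left h3 (le_of_lt h0)

lemma kl_pt_strict {r p : ℝ} (hr : 0 ≤ r) (hp : 0 < p) (hne : r ≠ p) :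
    r - p < r * Real.log (r / p) := by
  rcases eq_or_lt_of_le hr with h0 | h0
  · simp [← h0]; linarith
  · have hne1 : p / r ≠ 1 := by
      intro h; exact hne ((div_eq_one_iff_eq (ne_of_gt h0)).mp h).symm
    have h1 : Real.log (p / r) < p / r - 1 :=
      Real.log_lt_sub_one_of_pos (div_pos hp h0) hne1
    have h2 : Real.log (r / p) = - Real.log (p / r) := by
      rw [← Real.log_inv, inv_div]
    have h3 : 1 - p / r < Real.log (r / p) := by rw [h2]; linarith
    calc r - p = r * (1 - p / r) := by field_simp
    _ < r * Real.log (r / p) := by exact (mul_lt_mul_iff_right₀ h0).mpr h3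
open Finset

section Helpers
variable {X : Type*} [Fintype X]

lemma KL_ge (r p : X → ℝ) (hr : ∀ x, 0 ≤ r x) (hp : ∀ x, 0 ≤ p x)
    (hz : ∀ x, p x = 0 → r x = 0) : (∑ x, r x) - (∑ x, p x) ≤ KL r p := by
  rw [← Finset.sum_sub_distrib]
  exact Finset.sum_le_sum fun x _ => kl_pt (hr x) (hp x) (hz x)

lemma KL_nonneg (r p : X → ℝ) (hr : ∀ x, 0 ≤ r x) (hp : ∀ x, 0 ≤ p x)
    (hz : ∀ x, p x = 0 → r x = 0) (hsum : ∑ x, p x ≤ ∑ x, r x) : 0 ≤ KL r p := by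
  have := KL_ge r p hr hp hz
  linarith

lemma KL_pos (r p : X → ℝ) (hr : ∀ x, 0 ≤ r x) (hp : ∀ x, 0 < p x)
    (hsr : ∑ x, r x = 1) (hsp : ∑ x, p x = 1) (hne : r ≠ p) : 0 < KL r p := by
  obtain ⟨x0, hx0⟩ : ∃ x, r x ≠ p x := by
    by_contra h; push_neg at h; exact hne (funext h)
  have h1 : ∑ x, (r x - p x) < KL r p := by
    apply Finset.sum_lt_sum
    · exact fun x _ => kl_pt (hr x) (hp x).le (fun h => absurd h (ne_of_gt (hp x)))
    · exact ⟨x0, Finset.mem_univ _, kl_pt_strict (hr x0) (hp x0) hx0⟩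
  rw [Finset.sum_sub_distrib, hsr, hsp] at h1
  linarith

lemma KL_self (p : X → ℝ) : KL p p = 0 := by
  apply Finset.sum_eq_zero
  intro x _
  rcases eq_or_ne (p x) 0 with h | h
  · simp [h]
  · rw [div_self h, Real.log_one, mul_zero]

lemma log_sum_ineq (a b : X → ℝ) (ha : ∀ x, 0 ≤ a x) (hb : ∀ x, 0 ≤ b x)
    (hz : ∀ x, b x = 0 → a x = 0) :
    (∑ x, a x) * Real.log ((∑ x, a x) / (∑ x, b x)) ≤ ∑ x, a x * Real.log (a x / b x) := by
  set A := ∑ x, a x with hA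
  set B := ∑ x, b x with hB
  rcases eq_or_lt_of_le (Finset.sum_nonneg fun x _ => ha x : (0:ℝ) ≤ A) with h0 | h0
  · have hall : ∀ x, a x = 0 := by
      intro x
      have := (Finset.sum_eq_zero_iff_of_nonneg (fun x _ => ha x)).mp h0.symm
      exact this x (Finset.mem_univ x)
    have hA0 : A = 0 := by rw [hA, ← h0]
    have hR : ∑ x, a x * Real.log (a x / b x) = 0 :=
      Finset.sum_eq_zero fun x _ => by rw [hall x, zero_mul]
    rw [hA0, hR, zero_mul]
  · have hB0 : 0 < B := by
      rcases eq_or_lt_of_le (Finset.sum_nonneg fun x _ => hb x : (0:ℝ) ≤ B) with h | h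
      · exfalso
        have hballz := (Finset.sum_eq_zero_iff_of_nonneg (fun x _ => hb x)).mp h.symm
        have : A = 0 := Finset.sum_eq_zero fun x _ => hz x (hballz x (Finset.mem_univ x))
        linarith
      · exact h
    -- pointwise: a x * log (A/B) + (a x - b x * (A/B)) ≤ a x * log (a x / b x)
    have key : ∀ x, a x * Real.log (A / B) + (a x - b x * (A / B)) ≤ a x * Real.log (a x / b x) := by
      intro x
      rcases eq_or_lt_of_le (ha x) with h | h
      · have : 0 ≤ b x * (A / B) := mul_nonneg (hb x) (div_nonneg h0.le hB0.le)
        simp [← h]; linarith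
      · have hbx : 0 < b x := by
          rcases eq_or_lt_of_le (hb x) with hh | hh
          · exact absurd (hz x hh.symm) (ne_of_gt h)
          · exact hh
        have hp' : 0 < b x * (A / B) := mul_pos hbx (div_pos h0 hB0)
        have := kl_pt (le_of_lt h) hp'.le (fun hc => absurd hc (ne_of_gt hp'))
        have hlog : Real.log (a x / (b x * (A / B))) = Real.log (a x / b x) - Real.log (A / B) := by
          rw [div_mul_eq_div_div]
          rw [Real.log_div (by positivity) (ne_of_gt (div_pos h0 hB0))]
        rw [hlog] at this
        nlinarith
    have hsum : ∑ x, (a x * Real.log (A / B) + (a x - b x * (A / B))) ≤ ∑ x, a x * Real.log (a x / b x) := Finset.sum_le_sum (fun x _ => key x)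
    rw [Finset.sum_add_distrib, ← Finset.sum_mul, Finset.sum_sub_distrib] at hsum
    rw [← hA] at hsum
    have e1 : ∑ x, b x * (A / B) = A := by
      rw [← Finset.sum_mul, ← hB]
      field_simp
    rw [e1] at hsum
    linarith
end Helpers
section Helpers2
open Finset
variable {X : Type*} [Fintype X] {Y : Type*} [Fintype Y]

lemma KL_DPI (r p : X → ℝ) (W : X → Y → ℝ) (hr : ∀ x, 0 ≤ r x) (hp : ∀ x, 0 < p x)
    (hW : ∀ x, IsPMF (W x)) :
    KL (fun y => ∑ x, r x * W x y) (fun y => ∑ x, p x * W x y) ≤ KL r p := by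
  have step1 : KL (fun y => ∑ x, r x * W x y) (fun y => ∑ x, p x * W x y)
      ≤ ∑ y, ∑ x, (r x * W x y) * Real.log ((r x * W x y) / (p x * W x y)) := by
    apply Finset.sum_le_sum
    intro y _
    apply log_sum_ineq
    · exact fun x => mul_nonneg (hr x) ((hW x).1 y)
    · exact fun x => mul_nonneg (hp x).le ((hW x).1 y)
    · intro x h
      have : W x y = 0 := by
        rcases mul_eq_zero.mp h with h' | h'
        · exact absurd h' (ne_of_gt (hp x))
        · exact h'
      rw [this, mul_zero]
  have step2 : ∑ y, ∑ x, (r x * W x y) * Real.log ((r x * W x y) / (p x * W x y)) = KL r p := by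
    rw [Finset.sum_comm]
    apply Finset.sum_congr rfl
    intro x _
    have e : ∀ y, (r x * W x y) * Real.log ((r x * W x y) / (p x * W x y))
        = (r x * Real.log (r x / p x)) * W x y := by
      intro y
      rcases eq_or_ne (W x y) 0 with h | h
      · simp [h]
      · rw [mul_div_mul_right _ _ h]; ring
    rw [Finset.sum_congr rfl (fun y _ => e y), ← Finset.mul_sum, (hW x).2, mul_one]
  calc KL (fun y => ∑ x, r x * W x y) (fun y => ∑ x, p x * W x y)
      ≤ ∑ y, ∑ x, (r x * W x y) * Real.log ((r x * W x y) / (p x * W x y)) := step1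
    _ = KL r p := step2

lemma KL_le_chiSq (r p : X → ℝ) (hr : ∀ x, 0 ≤ r x) (hp : ∀ x, 0 < p x)
    (hsr : ∑ x, r x = 1) (hsp : ∑ x, p x = 1) :
    KL r p ≤ ∑ x, (r x - p x)^2 / p x := by
  have key : ∀ x, r x * Real.log (r x / p x) ≤ (r x)^2 / p x - r x := by
    intro x
    rcases eq_or_lt_of_le (hr x) with h | h
    · rw [← h]; rw [zero_mul]; norm_num
    · have h1 : Real.log (r x / p x) ≤ r x / p x - 1 :=
        Real.log_le_sub_one_of_pos (div_pos h (hp x))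
      have := mul_le_mul_of_nonneg_left h1 (le_of_lt h)
      calc r x * Real.log (r x / p x) ≤ r x * (r x / p x - 1) := this
        _ = (r x)^2 / p x - r x := by
            have hpx := ne_of_gt (hp x)
            field_simp
  have h2 : KL r p ≤ ∑ x, ((r x)^2 / p x - r x) := Finset.sum_le_sum fun x _ => key x
  have e : ∑ x, (r x - p x)^2 / p x = ∑ x, ((r x)^2 / p x - r x) + (∑ x, p x - ∑ x, r x) := by
    rw [← Finset.sum_sub_distrib, ← Finset.sum_add_distrib]
    apply Finset.sum_congr rfl
    intro x _
    have := ne_of_gt (hp x)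
    field_simp
    ring
  rw [e, hsr, hsp]
  linarith

lemma mutInfo_eq_sum (q : X → Y → ℝ) (hq : ∀ u x, 0 ≤ q u x) :
    mutInfo q = ∑ u, ∑ x, q u x * Real.log (q u x / ((∑ x', q u x') * (∑ u', q u' x))) := by
  have key : ∀ u x, q u x * Real.log (q u x / ((∑ x', q u x') * (∑ u', q u' x)))
      = q u x * Real.log (q u x) - q u x * Real.log (∑ x', q u x') - q u x * Real.log (∑ u', q u' x) := by
    intro u x
    rcases eq_or_lt_of_le (hq u x) with h | h
    · rw [← h]; ring
    · have hU : 0 < ∑ x', q u x' :=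
        lt_of_lt_of_le h (Finset.single_le_sum (fun i _ => hq u i) (Finset.mem_univ x))
      have hX : 0 < ∑ u', q u' x :=
        lt_of_lt_of_le h (Finset.single_le_sum (fun i _ => hq i x) (Finset.mem_univ u))
      rw [Real.log_div (ne_of_gt h) (ne_of_gt (mul_pos hU hX)),
        Real.log_mul (ne_of_gt hU) (ne_of_gt hX)]
      ring
  rw [Finset.sum_congr rfl fun u _ => Finset.sum_congr rfl fun x _ => key u x]
  simp only [Finset.sum_sub_distrib]
  have e1 : ∑ u, ∑ x, q u x * Real.log (∑ x', q u x')
      = - entropy (fun u => ∑ x, q u x) := by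
    unfold entropy
    rw [← Finset.sum_neg_distrib]
    apply Finset.sum_congr rfl
    intro u _
    rw [← Finset.sum_mul, Real.negMulLog_def]
    ring
  have e2 : ∑ u, ∑ x, q u x * Real.log (∑ u', q u' x)
      = - entropy (fun x => ∑ u, q u x) := by
    unfold entropy
    rw [Finset.sum_comm, ← Finset.sum_neg_distrib]
    apply Finset.sum_congr rfl
    intro x _
    rw [← Finset.sum_mul, Real.negMulLog_def]
    ring
  have e3 : ∑ u, ∑ x, q u x * Real.log (q u x)
      = - entropy (fun z : X × Y => q z.1 z.2) := by
    unfold entropy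
    rw [Fintype.sum_prod_type, ← Finset.sum_neg_distrib]
    apply Finset.sum_congr rfl
    intro u _
    rw [← Finset.sum_neg_distrib]
    apply Finset.sum_congr rfl
    intro x _
    rw [Real.negMulLog_def]
    ring
  rw [e1, e2, e3]
  unfold mutInfo
  ring

lemma mutInfo_eq_weighted_KL (q : X → Y → ℝ) (p : Y → ℝ) (hq : ∀ u x, 0 ≤ q u x)
    (hmarg : ∀ x, ∑ u, q u x = p x) :
    mutInfo q = ∑ u, (∑ x, q u x) * KL (fun x => q u x / ∑ x', q u x') p := by
  rw [mutInfo_eq_sum q hq]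
  apply Finset.sum_congr rfl
  intro u _
  rcases eq_or_lt_of_le (Finset.sum_nonneg (fun x _ => hq u x) : (0:ℝ) ≤ ∑ x, q u x) with h | h
  · have hall : ∀ x, q u x = 0 := fun x =>
      (Finset.sum_eq_zero_iff_of_nonneg (fun i _ => hq u i)).mp h.symm x (Finset.mem_univ x)
    rw [← h, zero_mul]
    exact Finset.sum_eq_zero fun x _ => by rw [hall x, zero_mul]
  · unfold KL
    rw [Finset.mul_sum]
    apply Finset.sum_congr rfl
    intro x _
    have hne : (∑ x', q u x') ≠ 0 := ne_of_gt h
    rw [hmarg x, div_div]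
    generalize Real.log (q u x / ((∑ x', q u x') * p x)) = L
    field_simp
end Helpers2
section Helpers3
open Finset
variable {X : Type*} [Fintype X] {Y : Type*} [Fintype Y] {U : Type*} [Fintype U]

lemma chan_sum (r : X → ℝ) (W : X → Y → ℝ) (hW : ∀ x, IsPMF (W x)) :
    ∑ y, ∑ x, r x * W x y = ∑ x, r x := by
  rw [Finset.sum_comm]
  apply Finset.sum_congr rfl
  intro x _
  rw [← Finset.mul_sum, (hW x).2, mul_one]

lemma chan_zero (p : X → ℝ) (W : X → Y → ℝ) (hpos : ∀ x, 0 < p x)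
    (hW : ∀ x, IsPMF (W x)) {y : Y} (h : ∑ x, p x * W x y = 0) : ∀ x, W x y = 0 := by
  intro x
  have h0 := (Finset.sum_eq_zero_iff_of_nonneg
    (fun x _ => mul_nonneg (hpos x).le ((hW x).1 y))).mp h x (Finset.mem_univ x)
  rcases mul_eq_zero.mp h0 with h' | h'
  · exact absurd h' (ne_of_gt (hpos x))
  · exact h'

lemma KL_chan_nonneg (r : X → ℝ) (p : X → ℝ) (W : X → Y → ℝ)
    (hr0 : ∀ x, 0 ≤ r x) (hr1 : ∑ x, r x = 1)
    (hpos : ∀ x, 0 < p x) (hp1 : ∑ x, p x = 1) (hW : ∀ x, IsPMF (W x)) :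
    0 ≤ KL (fun y => ∑ x, r x * W x y) (fun y => ∑ x, p x * W x y) := by
  apply KL_nonneg
  · exact fun y => Finset.sum_nonneg fun x _ => mul_nonneg (hr0 x) ((hW x).1 y)
  · exact fun y => Finset.sum_nonneg fun x _ => mul_nonneg (hpos x).le ((hW x).1 y)
  · intro y h
    have := chan_zero p W hpos hW h
    exact Finset.sum_eq_zero fun x _ => by rw [this x, mul_zero]
  · rw [chan_sum r W hW, chan_sum p W hW, hr1, hp1]

lemma marg_identities (p : X → ℝ) (W : X → Y → ℝ) (hW : ∀ x, IsPMF (W x))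
    (q : U → X → ℝ) (hq0 : ∀ u x, 0 ≤ q u x) (hmarg : ∀ x, ∑ u, q u x = p x) :
    mutInfo q = ∑ u, (∑ x, q u x) * KL (fun x => q u x / ∑ x', q u x') p
    ∧ mutInfo (fun u y => ∑ x, q u x * W x y)
      = ∑ u, (∑ x, q u x) *
          KL (fun y => ∑ x, (q u x / ∑ x', q u x') * W x y) (fun y => ∑ x, p x * W x y) := by
  constructor
  · exact mutInfo_eq_weighted_KL q p hq0 hmarg
  · have hq0' : ∀ u y, 0 ≤ ∑ x, q u x * W x y :=
      fun u y => Finset.sum_nonneg fun x _ => mul_nonneg (hq0 u x) ((hW x).1 y)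
    have hmarg' : ∀ y, ∑ u, ∑ x, q u x * W x y = ∑ x, p x * W x y := by
      intro y
      rw [Finset.sum_comm]
      apply Finset.sum_congr rfl
      intro x _
      rw [← Finset.sum_mul, hmarg x]
    have base := mutInfo_eq_weighted_KL (fun u y => ∑ x, q u x * W x y)
      (fun y => ∑ x, p x * W x y) hq0' hmarg'
    rw [base]
    apply Finset.sum_congr rfl
    intro u _
    have hUsum : ∑ y, ∑ x, q u x * W x y = ∑ x, q u x := chan_sum (q u) W hW
    rcases eq_or_lt_of_le (Finset.sum_nonneg (fun x _ => hq0 u x) : (0:ℝ) ≤ ∑ x, q u x) with h | h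
    · rw [hUsum, ← h, zero_mul, zero_mul]
    · rw [hUsum]
      congr 1
      congr 1
      funext y
      rw [Finset.sum_div]
      apply Finset.sum_congr rfl
      intro x _
      ring
end Helpers3

set_option maxHeartbeats 1000000 in
open Finset in
/-- `s*(X;Y)` equals the supremum of `I(U;Y)/I(U;X)` over finite-valued `U`
with `U - X - Y` Markov and `I(U;X) > 0`.  A Markov chain `U - X - Y` with `X ∼ p` and
channel `W` is described by a joint pmf `q(u,x)` with `X`-marginal `p`. -/
theorem sStar_eq_sup_mutInfo_ratio {X Y : Type*} [Fintype X] [Fintype Y]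
    (p : X → ℝ) (W : X → Y → ℝ)
    (hp : IsPMF p) (hpos : ∀ x, 0 < p x) (hW : ∀ x, IsPMF (W x)) :
    sStar p W = sSup {c : ℝ | ∃ n : ℕ, ∃ q : Fin n → X → ℝ,
      (∀ u x, 0 ≤ q u x) ∧ (∀ x, ∑ u, q u x = p x) ∧
      0 < mutInfo q ∧
      c = mutInfo (fun u y => ∑ x, q u x * W x y) / mutInfo q} := by
  obtain ⟨hp0, hp1⟩ := hp
  set S1 : Set ℝ := {c : ℝ | ∃ r : X → ℝ, IsPMF r ∧ r ≠ p ∧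
    c = KL (fun y => ∑ x, r x * W x y) (fun y => ∑ x, p x * W x y) / KL r p} with hS1
  set S2 : Set ℝ := {c : ℝ | ∃ n : ℕ, ∃ q : Fin n → X → ℝ,
      (∀ u x, 0 ≤ q u x) ∧ (∀ x, ∑ u, q u x = p x) ∧
      0 < mutInfo q ∧
      c = mutInfo (fun u y => ∑ x, q u x * W x y) / mutInfo q} with hS2
  have hsStar : sStar p W = sSup S1 := rfl
  -- basic facts on S1 elements
  have hS1elem : ∀ c ∈ S1, 0 ≤ c ∧ c ≤ 1 := by
    rintro c ⟨r, ⟨hr0, hr1⟩, hrne, rfl⟩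
    have hB : 0 < KL r p := KL_pos r p hr0 hpos hr1 hp1 hrne
    have hA0 : 0 ≤ KL (fun y => ∑ x, r x * W x y) (fun y => ∑ x, p x * W x y) :=
      KL_chan_nonneg r p W hr0 hr1 hpos hp1 hW
    have hAB := KL_DPI r p W hr0 hpos hW
    exact ⟨div_nonneg hA0 hB.le, (div_le_one hB).mpr hAB⟩
  have hS1bdd : BddAbove S1 := ⟨1, fun c hc => (hS1elem c hc).2⟩
  have hsStar0 : 0 ≤ sStar p W := by
    rw [hsStar]; exact Real.sSup_nonneg fun c hc => (hS1elem c hc).1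
  -- basic facts on S2 elements
  have hS2elem : ∀ c ∈ S2, 0 ≤ c ∧ c ≤ 1 := by
    rintro c ⟨n, q, hq0, hmarg, hmi, rfl⟩
    obtain ⟨id1, id2⟩ := marg_identities p W hW q hq0 hmarg
    have hterm : ∀ u : Fin n, 0 ≤ (∑ x, q u x) ∧
        (∑ x, q u x) * KL (fun y => ∑ x, (q u x / ∑ x', q u x') * W x y)
            (fun y => ∑ x, p x * W x y)
          ≤ (∑ x, q u x) * KL (fun x => q u x / ∑ x', q u x') p ∧
        0 ≤ (∑ x, q u x) * KL (fun y => ∑ x, (q u x / ∑ x', q u x') * W x y)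
            (fun y => ∑ x, p x * W x y) := by
      intro u
      have hw0 : 0 ≤ ∑ x, q u x := Finset.sum_nonneg fun x _ => hq0 u x
      refine ⟨hw0, ?_, ?_⟩
      · apply mul_le_mul_of_nonneg_left _ hw0
        exact KL_DPI _ p W (fun x => div_nonneg (hq0 u x) hw0) hpos hW
      · rcases eq_or_lt_of_le hw0 with h | h
        · rw [← h, zero_mul]
        · apply mul_nonneg hw0
          apply KL_chan_nonneg _ p W (fun x => div_nonneg (hq0 u x) hw0) _ hpos hp1 hW
          rw [← Finset.sum_div, div_self (ne_of_gt h)]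
    have hnum0 : 0 ≤ mutInfo (fun u y => ∑ x, q u x * W x y) := by
      rw [id2]; exact Finset.sum_nonneg fun u _ => (hterm u).2.2
    have hle : mutInfo (fun u y => ∑ x, q u x * W x y) ≤ mutInfo q := by
      rw [id1, id2]; exact Finset.sum_le_sum fun u _ => (hterm u).2.1
    exact ⟨div_nonneg hnum0 hmi.le, (div_le_one hmi).mpr hle⟩
  have hS2bdd : BddAbove S2 := ⟨1, fun c hc => (hS2elem c hc).2⟩
  have hS2sup0 : 0 ≤ sSup S2 := Real.sSup_nonneg fun c hc => (hS2elem c hc).1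
  apply le_antisymm
  · -- sStar ≤ sSup S2
    rw [hsStar]
    apply Real.sSup_le _ hS2sup0
    rintro c ⟨r, ⟨hr0, hr1⟩, hrne, rfl⟩
    set A := KL (fun y => ∑ x, r x * W x y) (fun y => ∑ x, p x * W x y) with hAdef
    set B := KL r p with hBdef
    have hB : 0 < B := KL_pos r p hr0 hpos hr1 hp1 hrne
    have hA0 : 0 ≤ A := KL_chan_nonneg r p W hr0 hr1 hpos hp1 hW
    rcases eq_or_lt_of_le hA0 with hA | hA
    · rw [← hA, zero_div]; exact hS2sup0
    apply le_of_forall_pos_le_add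
    intro δ hδ
    set ε' : ℝ := δ * B^2 / A with hε'def
    have hε'pos : 0 < ε' := div_pos (mul_pos hδ (pow_pos hB 2)) hA
    have hXne : (Finset.univ : Finset X).Nonempty := by
      rcases Finset.univ.eq_empty_or_nonempty (α := X) with h | h
      · exfalso; rw [h, Finset.sum_empty] at hp1; norm_num at hp1
      · exact h
    obtain ⟨x0, -, hx0⟩ := Finset.exists_min_image Finset.univ p hXne
    set C0 : ℝ := ∑ x, (p x - r x)^2 / p x with hC0def
    have hC0 : 0 ≤ C0 :=
      Finset.sum_nonneg fun x _ => div_nonneg (sq_nonneg _) (hpos x).le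
    set ε : ℝ := min (p x0 / 2) (min (1/2) (ε' / (4 * C0 + 1))) with hεdef
    have hεpos : 0 < ε := by
      have := hpos x0
      apply lt_min (by positivity) (lt_min (by norm_num) (by positivity))
    have hεhalf : ε ≤ 1/2 := le_trans (min_le_right _ _) (min_le_left _ _)
    have hε1 : (0:ℝ) < 1 - ε := by linarith
    have hεm : ∀ x, ε ≤ p x / 2 := fun x =>
      le_trans (min_le_left _ _) (by linarith [hx0 x (Finset.mem_univ x)])
    have hεC0 : ε * (4 * C0 + 1) ≤ ε' := by
      have h1 : ε ≤ ε' / (4 * C0 + 1) := le_trans (min_le_right _ _) (min_le_right _ _)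
      rw [le_div_iff₀ (by positivity)] at h1
      exact h1
    clear_value ε
    have hrle1 : ∀ x, r x ≤ 1 := by
      intro x
      rw [← hr1]
      exact Finset.single_le_sum (fun i _ => hr0 i) (Finset.mem_univ x)
    clear_value ε' C0
    set q : Fin 2 → X → ℝ := fun u x => if u = 0 then ε * r x else p x - ε * r x with hqdef
    have hq0x : ∀ x, q 0 x = ε * r x := fun x => if_pos rfl
    have hq1x : ∀ x, q 1 x = p x - ε * r x := fun x => if_neg (by decide)
    have hq1nn : ∀ x, 0 ≤ p x - ε * r x := by
      intro x
      have h1 := hεm x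
      have h2 : ε * r x ≤ ε := by nlinarith [hr0 x, hrle1 x, hεpos.le]
      linarith [hpos x]
    have hq0' : ∀ u x, 0 ≤ q u x := by
      intro u x
      rcases eq_or_ne u 0 with h | h
      · subst h; rw [hq0x]; exact mul_nonneg hεpos.le (hr0 x)
      · have h1 : u = 1 := by omega
        subst h1; rw [hq1x]; exact hq1nn x
    have hmargq : ∀ x, ∑ u : Fin 2, q u x = p x := by
      intro x
      rw [Fin.sum_univ_two, hq0x, hq1x]; ring
    have hw0 : ∑ x, q 0 x = ε := by
      simp only [hq0x]; rw [← Finset.mul_sum, hr1, mul_one]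
    have hw1 : ∑ x, q 1 x = 1 - ε := by
      simp only [hq1x]
      rw [Finset.sum_sub_distrib, hp1, ← Finset.mul_sum, hr1, mul_one]
    set r' : X → ℝ := fun x => (p x - ε * r x) / (1 - ε) with hr'def
    have hr'0 : ∀ x, 0 ≤ r' x := fun x => div_nonneg (hq1nn x) hε1.le
    have hr'1 : ∑ x, r' x = 1 := by
      rw [hr'def]
      simp only
      rw [← Finset.sum_div, Finset.sum_sub_distrib, hp1, ← Finset.mul_sum, hr1, mul_one,
        div_self hε1.ne']
    have e0 : (fun x => q 0 x / ε) = r := by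
      funext x
      rw [hq0x, mul_div_cancel_left₀ _ hεpos.ne']
    have e1 : (fun x => q 1 x / (1 - ε)) = r' := by
      funext x
      rw [hq1x]
    have e0W : (fun y => ∑ x, q 0 x / ε * W x y) = (fun y => ∑ x, r x * W x y) := by
      funext y
      exact Finset.sum_congr rfl fun x _ => by
        rw [show q 0 x / ε = r x from congrFun e0 x]
    have e1W : (fun y => ∑ x, q 1 x / (1 - ε) * W x y) = (fun y => ∑ x, r' x * W x y) := by
      funext y
      exact Finset.sum_congr rfl fun x _ => by
        rw [show q 1 x / (1 - ε) = r' x from congrFun e1 x]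
    obtain ⟨id1, id2⟩ := marg_identities p W hW q hq0' hmargq
    rw [Fin.sum_univ_two] at id1 id2
    rw [hw0, hw1] at id1 id2
    rw [e0, e1, ← hBdef] at id1
    rw [e0W, e1W, ← hAdef] at id2
    have hKLr' : 0 ≤ KL r' p :=
      KL_nonneg r' p hr'0 (fun x => (hpos x).le)
        (fun x h => absurd h (ne_of_gt (hpos x))) (by rw [hr'1, hp1])
    have hKLr'W : 0 ≤ KL (fun y => ∑ x, r' x * W x y) (fun y => ∑ x, p x * W x y) :=
      KL_chan_nonneg r' p W hr'0 hr'1 hpos hp1 hW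
    have hchiterm : ∀ x, (r' x - p x)^2 / p x = (ε/(1-ε))^2 * ((p x - r x)^2 / p x) := by
      intro x
      have hpx := (hpos x).ne'
      show ((p x - ε * r x) / (1 - ε) - p x)^2 / p x = _
      field_simp
      ring
    have hchi : KL r' p ≤ (ε/(1-ε))^2 * C0 := by
      calc KL r' p ≤ ∑ x, (r' x - p x)^2 / p x := KL_le_chiSq r' p hr'0 hpos hr'1 hp1
        _ = (ε/(1-ε))^2 * C0 := by
            rw [hC0def, Finset.mul_sum]
            exact Finset.sum_congr rfl fun x _ => hchiterm x
    clear_value q r'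
    have hfrac : ε/(1-ε) ≤ 2*ε := by
      rw [div_le_iff₀ hε1]; nlinarith
    have hsq : (ε/(1-ε))^2 ≤ 4*ε^2 := by
      nlinarith [div_nonneg hεpos.le hε1.le, hfrac]
    have hKLr'bd : KL r' p ≤ 4*ε^2*C0 :=
      le_trans hchi (by nlinarith [hsq, hC0])
    have hmi : 0 < mutInfo q := by
      rw [id1]; nlinarith [mul_nonneg hε1.le hKLr']
    have hden : mutInfo q ≤ ε * (B + ε') := by
      rw [id1]
      have h4 : (1-ε) * KL r' p ≤ 4*ε^2*C0 := by nlinarith [hKLr', hε1, hεpos]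
      have h5 : 4*ε^2*C0 ≤ ε*ε' := by nlinarith [hεC0, hεpos.le]
      linarith
    have hnum : ε * A ≤ mutInfo (fun u y => ∑ x, q u x * W x y) := by
      rw [id2]; nlinarith [mul_nonneg hε1.le hKLr'W]
    have hmem : mutInfo (fun u y => ∑ x, q u x * W x y) / mutInfo q ∈ S2 :=
      ⟨2, q, hq0', hmargq, hmi, rfl⟩
    have hle := le_csSup hS2bdd hmem
    have hBε : (0:ℝ) < B + ε' := by linarith
    have hstep1 : A/(B+ε') ≤ mutInfo (fun u y => ∑ x, q u x * W x y) / mutInfo q := by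
      rw [show A/(B+ε') = ε*A/(ε*(B+ε')) from (mul_div_mul_left A (B+ε') hεpos.ne').symm]
      exact div_le_div₀ (le_trans (by positivity) hnum) hnum hmi hden
    have hfin : A/B ≤ A/(B+ε') + δ := by
      have h2 : A/B - A/(B+ε') = A*ε'/(B*(B+ε')) := by field_simp; ring
      have h3 : A*ε' = δ*B^2 := by rw [hε'def]; field_simp
      rw [h3] at h2
      have h4 : δ*B^2/(B*(B+ε')) ≤ δ := by
        rw [div_le_iff₀ (by positivity)]; nlinarith [mul_pos (mul_pos hδ hB) hε'pos]
      linarith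
    calc A / B ≤ A/(B+ε') + δ := hfin
      _ ≤ mutInfo (fun u y => ∑ x, q u x * W x y) / mutInfo q + δ := by linarith
      _ ≤ sSup S2 + δ := by linarith
  · -- sSup S2 ≤ sStar
    apply Real.sSup_le _ hsStar0
    rintro c ⟨n, q, hq0, hmarg, hmi, rfl⟩
    obtain ⟨id1, id2⟩ := marg_identities p W hW q hq0 hmarg
    have hterm : ∀ u : Fin n,
        (∑ x, q u x) * KL (fun y => ∑ x, (q u x / ∑ x', q u x') * W x y)
            (fun y => ∑ x, p x * W x y)
          ≤ sStar p W * ((∑ x, q u x) * KL (fun x => q u x / ∑ x', q u x') p) := by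
      intro u
      have hw0 : 0 ≤ ∑ x, q u x := Finset.sum_nonneg fun x _ => hq0 u x
      rcases eq_or_lt_of_le hw0 with h | h
      · rw [← h, zero_mul, zero_mul, mul_zero]
      · set ru : X → ℝ := fun x => q u x / ∑ x', q u x' with hru
        have hru0 : ∀ x, 0 ≤ ru x := fun x => div_nonneg (hq0 u x) hw0
        have hru1 : ∑ x, ru x = 1 := by
          rw [hru, ← Finset.sum_div, div_self (ne_of_gt h)]
        rcases eq_or_ne ru p with heq | hne
        · have hfun : (fun y => ∑ x, (q u x / ∑ x', q u x') * W x y)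
              = (fun y => ∑ x, p x * W x y) := by
            funext y
            exact Finset.sum_congr rfl fun x _ => by rw [show q u x / ∑ x', q u x' = p x from congrFun heq x]
          rw [hfun, heq, KL_self, KL_self]
          simp
        · have hmem : KL (fun y => ∑ x, ru x * W x y) (fun y => ∑ x, p x * W x y) / KL ru p ∈ S1 :=
            ⟨ru, ⟨hru0, hru1⟩, hne, rfl⟩
          have hle := le_csSup hS1bdd hmem
          rw [← hsStar] at hle
          have hB : 0 < KL ru p := KL_pos ru p hru0 hpos hru1 hp1 hne
          have hA : KL (fun y => ∑ x, ru x * W x y) (fun y => ∑ x, p x * W x y)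
              ≤ sStar p W * KL ru p := by
            rw [div_le_iff₀ hB] at hle
            exact hle
          calc (∑ x, q u x) * KL (fun y => ∑ x, (q u x / ∑ x', q u x') * W x y)
                (fun y => ∑ x, p x * W x y)
              = (∑ x, q u x) * KL (fun y => ∑ x, ru x * W x y) (fun y => ∑ x, p x * W x y) := rfl
            _ ≤ (∑ x, q u x) * (sStar p W * KL ru p) := mul_le_mul_of_nonneg_left hA hw0
            _ = sStar p W * ((∑ x, q u x) * KL ru p) := by ring
    have hsum : mutInfo (fun u y => ∑ x, q u x * W x y) ≤ sStar p W * mutInfo q := by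
      rw [id1, id2, Finset.mul_sum]
      exact Finset.sum_le_sum fun u _ => hterm u
    rw [div_le_iff₀ hmi]
    exact hsum
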